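/- arXiv:2303.05394 — 2 statements merged into one kernel-verified Lean document; each statement's English description precedes it below -/
import Mathlib

section
/- Let f : ℝⁿ → ℝ be Lipschitz with constant L on the axis-aligned box [ℓ,u] ⊆ ℝⁿ, let ρ₁ > L, and suppose f(x) > 0 for every vertex x of the box. Let ρ₂ be the minimum of f over the vertices of the box. If the Euclidean norm ‖u − ℓ‖₂ < ρ₂/ρ₁, then f(x) > 0 for all x in the box [ℓ,u]. -/
/-- The axis-aligned box `[ℓ, u]` in `ℝⁿ`. -/
def Box {n : ℕ} (ℓ u : EuclideanSpace ℝ (Fin n)) : Set (EuclideanSpace ℝ (Fin n)) :=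
  {x | ∀ i, ℓ i ≤ x i ∧ x i ≤ u i}

/-- The vertices of the box `[ℓ, u]`. -/
def IsVertex {n : ℕ} (ℓ u : EuclideanSpace ℝ (Fin n)) (x : EuclideanSpace ℝ (Fin n)) : Prop :=
  ∀ i, x i = ℓ i ∨ x i = u i

theorem lip_verify_sound {n : ℕ} (ℓ u : EuclideanSpace ℝ (Fin n))
    (f : EuclideanSpace ℝ (Fin n) → ℝ) (L ρ₁ ρ₂ : ℝ)
    (hLip : ∀ x ∈ Box ℓ u, ∀ y ∈ Box ℓ u, |f x - f y| ≤ L * ‖x - y‖)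
    (hρ₁ : ρ₁ > L)
    (hpos : ∀ x, IsVertex ℓ u x → f x > 0)
    (hρ₂min : IsLeast {r : ℝ | ∃ x, IsVertex ℓ u x ∧ f x = r} ρ₂)
    (hdiam : ‖u - ℓ‖ < ρ₂ / ρ₁) :
    ∀ x ∈ Box ℓ u, f x > 0 := by
  intro x hx
  obtain ⟨v, hv, hfv⟩ := hρ₂min.1
  have hρ₂pos : 0 < ρ₂ := hfv ▸ hpos v hv
  have hρ₁pos : 0 < ρ₁ := by
    by_contra h
    push_neg at h
    have : ρ₂ / ρ₁ ≤ 0 := div_nonpos_of_nonneg_of_nonpos hρ₂pos.le h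
    linarith [norm_nonneg (u - ℓ), hdiam]
  have hkey : ‖u - ℓ‖ * ρ₁ < ρ₂ := (lt_div_iff₀ hρ₁pos).1 hdiam
  have hℓbox : ℓ ∈ Box ℓ u := fun i => ⟨le_refl _, (hx i).1.trans (hx i).2⟩
  have hℓv : IsVertex ℓ u ℓ := fun i => Or.inl rfl
  have hnormle : ‖x - ℓ‖ ≤ ‖u - ℓ‖ := by
    rw [EuclideanSpace.norm_eq, EuclideanSpace.norm_eq]
    apply Real.sqrt_le_sqrt
    apply Finset.sum_le_sum
    intro i _
    have h1 := (hx i).1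
    have h2 := (hx i).2
    simp only [PiLp.sub_apply]
    rw [Real.norm_eq_abs, Real.norm_eq_abs]
    have : |x i - ℓ i| ≤ |u i - ℓ i| := by
      rw [abs_of_nonneg (by linarith), abs_of_nonneg (by linarith)]
      linarith
    nlinarith [abs_nonneg (x i - ℓ i)]
  have hL : L * ‖x - ℓ‖ ≤ ρ₁ * ‖u - ℓ‖ := by
    rcases le_or_gt L 0 with hL0 | hL0
    · exact le_trans (mul_nonpos_of_nonpos_of_nonneg hL0 (norm_nonneg _))
        (mul_nonneg hρ₁pos.le (norm_nonneg _))
    · calc L * ‖x - ℓ‖ ≤ L * ‖u - ℓ‖ := by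
            exact mul_le_mul_of_nonneg_left hnormle hL0.le
        _ ≤ ρ₁ * ‖u - ℓ‖ := mul_le_mul_of_nonneg_right hρ₁.le (norm_nonneg _)
  have hlip := hLip x hx ℓ hℓbox
  have hfℓ : ρ₂ ≤ f ℓ := hρ₂min.2 ⟨ℓ, hℓv, rfl⟩
  have := abs_le.1 hlip
  linarith [this.1, this.2]
end

section
/- Define the robustness of the bounded until: ρ(φ₁ U_{[a,b]} φ₂, k) = max over k' ∈ [k+a,k+b] of min(ρ(φ₂,k'), min over k'' ∈ [k,k') of ρ(φ₁,k'')). If ρ(φ₁,·) and ρ(φ₂,·) are given by functions r₁, r₂ : ℕ → ℝ, then ρ(φ₁ U_{[a,b]} φ₂, k) > 0 if and only if there exists k' ∈ [k+a,k+b] such that r₂(k') > 0 and r₁(k'') > 0 for all k'' with k ≤ k'' < k'. -/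
/-- Robustness of the bounded until, computed in `EReal` so that the inner
minimum over an empty range is `+∞`. -/
noncomputable def untilRob (r₁ r₂ : ℕ → ℝ) (a b k : ℕ)
    (hne : (Finset.Icc (k + a) (k + b)).Nonempty) : EReal :=
  (Finset.Icc (k + a) (k + b)).sup' hne fun k' =>
    min (r₂ k' : EReal) ((Finset.Ico k k').inf fun k'' => (r₁ k'' : EReal))

theorem until_robustness_pos_iff (r₁ r₂ : ℕ → ℝ) (a b k : ℕ) (hab : a ≤ b)
    (hne : (Finset.Icc (k + a) (k + b)).Nonempty) :
    0 < untilRob r₁ r₂ a b k hne ↔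
      ∃ k', k + a ≤ k' ∧ k' ≤ k + b ∧ 0 < r₂ k' ∧
        ∀ k'', k ≤ k'' → k'' < k' → 0 < r₁ k'' := by
  unfold untilRob
  rw [Finset.lt_sup'_iff]
  constructor
  · rintro ⟨k', hk', hpos⟩
    rw [Finset.mem_Icc] at hk'
    rw [lt_min_iff] at hpos
    refine ⟨k', hk'.1, hk'.2, by exact_mod_cast hpos.1, fun k'' h1 h2 => ?_⟩
    have := hpos.2
    have hle : ((Finset.Ico k k').inf fun k'' => (r₁ k'' : EReal)) ≤ r₁ k'' :=
      Finset.inf_le (Finset.mem_Ico.mpr ⟨h1, h2⟩)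
    exact_mod_cast lt_of_lt_of_le this hle
  · rintro ⟨k', h1, h2, h3, h4⟩
    refine ⟨k', Finset.mem_Icc.mpr ⟨h1, h2⟩, lt_min_iff.mpr ⟨by exact_mod_cast h3, ?_⟩⟩
    rw [Finset.lt_inf_iff (by norm_num : (0:EReal) < ⊤)]
    intro i hi
    rw [Finset.mem_Ico] at hi
    exact_mod_cast h4 i hi.1 hi.2
end
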